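/- Let f* : [0,1]^{d_in} → A with ‖f*‖_{H¹([0,1]^{d_in}; ℝ^{d_out})} < ∞, where A = ℝ^{d_out} or A = ∏_{i=1}^{d_out}[a_i, b_i] is a cube. Then there exist constants c, C > 0, depending only on d_in, d_out, and ‖f*‖_{H¹([0,1]^{d_in}; ℝ^{d_out})}, such that for every M ∈ ℕ there is a feedforward ReLU network f_NN ∈ F_NN(d_in, d_out, L, W) with L ≤ c(1 + log M) and W ≤ c·M satisfying ‖f* − f_NN‖_{L^∞([0,1]^{d_in}; ℝ^{d_out})} ≤ C·M^{−1/d_in}, and moreover the range of f_NN is contained in A. -/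

import Mathlib

noncomputable section

open Real Set

/-- `ℝ^n` with the Euclidean norm. -/
abbrev Euc (n : ℕ) : Type := EuclideanSpace ℝ (Fin n)

/-- An affine layer `x ↦ A x + b`. -/
def affineLayer {n m : ℕ} (A : Matrix (Fin m) (Fin n) ℝ) (b : Euc m) : Euc n → Euc m :=
  fun x => WithLp.toLp 2 fun i => (∑ j, A i j * x j) + b i

/-- Coordinatewise ReLU. -/
def reluV {n : ℕ} (x : Euc n) : Euc n := WithLp.toLp 2 fun i => max (x i) 0

/-- `IsFNNExact L din dout W f` : `f` is realized by a feedforward ReLU network with exactly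
`L` hidden layers, input dimension `din`, output dimension `dout`, all hidden widths `≤ W`. -/
def IsFNNExact : (L : ℕ) → (din dout W : ℕ) → (Euc din → Euc dout) → Prop
  | 0, din, dout, _, f =>
      ∃ (A : Matrix (Fin dout) (Fin din) ℝ) (b : Euc dout), f = affineLayer A b
  | L + 1, din, dout, W, f =>
      ∃ m : ℕ, m ≤ W ∧
        ∃ (A : Matrix (Fin m) (Fin din) ℝ) (b : Euc m) (g : Euc m → Euc dout),
          IsFNNExact L m dout W g ∧ f = g ∘ reluV ∘ affineLayer A b

/-- The class `F_NN(din, dout, L, W)`: depth at most `L`, width at most `W`. -/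
def MemFNN (din dout L W : ℕ) (f : Euc din → Euc dout) : Prop :=
  ∃ L' ≤ L, IsFNNExact L' din dout W f

/-- Membership in `F_NN(din, dout, L, W)` with real-valued size bounds. -/
def MemFNNR (din dout : ℕ) (L W : ℝ) (f : Euc din → Euc dout) : Prop :=
  ∃ L' W' : ℕ, (L' : ℝ) ≤ L ∧ (W' : ℝ) ≤ W ∧ IsFNNExact L' din dout W' f

/-- The latent cube `Z([a,b]) = [0,1]^d × [a,b] ⊆ ℝ^{d+1}`. -/
def Zcube (d : ℕ) (a b : ℝ) : Set (Euc (d + 1)) :=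
  {z | (∀ i : Fin d, z i.castSucc ∈ Icc (0 : ℝ) 1) ∧ z (Fin.last d) ∈ Icc a b}

/-- Reach of a subset of Euclidean space. -/
def reach {n : ℕ} (M : Set (Euc n)) : ℝ :=
  sInf {r : ℝ | 0 < r ∧ ∃ x ∈ M, ∃ y ∈ M, x ≠ y ∧ ∃ v : Euc n,
    r = ‖x - v‖ ∧ r = ‖y - v‖ ∧ r = Metric.infDist v M}

/-- The states at time `t`: `M(t) = F(M(0), t)`. -/
def Mt {D : ℕ} (F : Euc D → ℝ → Euc D) (M0 : Set (Euc D)) (t : ℝ) : Set (Euc D) :=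
  (fun x => F x t) '' M0

/-- `M([a,b]) = ⋃_{t ∈ [a,b]} M(t)`. -/
def Mab {D : ℕ} (F : Euc D → ℝ → Euc D) (M0 : Set (Euc D)) (a b : ℝ) : Set (Euc D) :=
  ⋃ t ∈ Icc a b, Mt F M0 t

/-- The windowed composition `(T^{i} ∘ (P^{i})^{∘𝐓_i}) ∘ ⋯ ∘ (T^{1} ∘ (P^{1})^{∘𝐓_1})`
(0-indexed), where `𝐓_j = κ(j+1) − κ(j)`. -/
def weldChain {α : Type*} (P Tc : ℕ → α → α) (κ : ℕ → ℕ) : ℕ → α → α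
  | 0 => id
  | j + 1 => (Tc j) ∘ (P j)^[κ (j + 1) - κ j] ∘ weldChain P Tc κ j

/-- The unit cube `[0,1]^d ⊆ ℝ^d`. -/
def unitCube (d : ℕ) : Set (Euc d) := {x | ∀ i, x i ∈ Icc (0 : ℝ) 1}

/-! Each coordinate of `f*` is approximated on the grid `{0, 1/N, …, 1}^d`, `N = 2^s`, by the
lower envelope of cones `x ↦ max_p (f*(p)_o - K‖x - p‖₁)`: by the Lipschitz bound every cone
lies below `f*_o`, and the cone at a grid point `p` with `‖x - p‖₁ ≤ d/N` is at least
`f*_o(x) - 2Kd/N` at `x`. A cone is a one-hidden-layer ReLU network (`|t| = relu t + relu (-t)`),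
and the maximum of the `(N + 1)^d ≤ 2^{d(s+1)}` cones is computed by a binary tree of pairwise
maxima `max a b = relu (a - b) + relu b - relu (-b)` of networks run in parallel, so depth and
width are `O(d s)` and `O(2^{d s})`. For a box-valued target a last layer clamps each
coordinate, `a + relu (y - a) - relu (y - b)`, which keeps the range in the box without
increasing the error. Choosing `2^s ≈ M^{1/d}` gives the rates. -/

section Networks

variable {n m e W : ℕ}

lemma affineLayer_comp_affineLayer {k : ℕ} (A' : Matrix (Fin k) (Fin m) ℝ) (b' : Euc k)
    (A : Matrix (Fin m) (Fin n) ℝ) (b : Euc m) :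
    affineLayer A' b' ∘ affineLayer A b = affineLayer (A' * A) (affineLayer A' b' b) := by
  funext x; ext i
  simp only [Function.comp_apply, affineLayer, Matrix.mul_apply, mul_add, Finset.mul_sum,
    Finset.sum_add_distrib, Finset.sum_mul, add_assoc]
  rw [Finset.sum_comm]
  simp only [mul_assoc]

namespace IsFNNExact

lemma comp_affineLayer {L : ℕ} {g : Euc m → Euc e} (hg : IsFNNExact L m e W g)
    (A : Matrix (Fin m) (Fin n) ℝ) (b : Euc m) : IsFNNExact L n e W (g ∘ affineLayer A b) := by
  cases L with
  | zero =>
    obtain ⟨A', b', rfl⟩ := hg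
    exact ⟨_, _, affineLayer_comp_affineLayer A' b' A b⟩
  | succ L =>
    obtain ⟨m', hm', A', b', g', hg', rfl⟩ := hg
    exact ⟨m', hm', _, _, g', hg', by rw [← affineLayer_comp_affineLayer]; rfl⟩

lemma mono {L W' : ℕ} {f : Euc n → Euc e} (hf : IsFNNExact L n e W f) (hW : W ≤ W') :
    IsFNNExact L n e W' f := by
  induction L generalizing n f with
  | zero => exact hf
  | succ L ih =>
    obtain ⟨m, hm, A, b, g, hg, rfl⟩ := hf
    exact ⟨m, hm.trans hW, A, b, g, ih hg, rfl⟩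

lemma comp {L₁ L₂ : ℕ} {f : Euc n → Euc m} {g : Euc m → Euc e}
    (hf : IsFNNExact L₁ n m W f) (hg : IsFNNExact L₂ m e W g) :
    IsFNNExact (L₁ + L₂) n e W (g ∘ f) := by
  induction L₁ generalizing n f with
  | zero =>
    obtain ⟨A, b, rfl⟩ := hf
    simpa using hg.comp_affineLayer A b
  | succ L₁ ih =>
    obtain ⟨m₁, hm₁, A, b, f₁, hf₁, rfl⟩ := hf
    rw [Nat.add_right_comm]
    exact ⟨m₁, hm₁, A, b, g ∘ f₁, ih hf₁, rfl⟩

end IsFNNExact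

lemma isFNNExact_one_hiddenLayer {ι : Type*} [Fintype ι] (w : ι → Fin n → ℝ) (β : ι → ℝ)
    (u : Fin e → ι → ℝ) (γ : Fin e → ℝ) :
    IsFNNExact 1 n e (Fintype.card ι) fun x =>
      WithLp.toLp 2 fun o => ∑ j, u o j * max (∑ i, w j i * x i + β j) 0 + γ o := by
  let σ := (Fintype.equivFin ι).symm
  refine ⟨_, le_rfl, fun j => w (σ j), WithLp.toLp 2 fun j => β (σ j),
    affineLayer (fun o j => u o (σ j)) (WithLp.toLp 2 γ), ⟨_, _, rfl⟩, ?_⟩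
  funext x; ext o
  simp only [Function.comp_apply, affineLayer, reluV]
  rw [← σ.sum_comp]

end Networks

section Parallel

variable {n₁ n₂ e₁ e₂ : ℕ}

def parallel (F₁ : Euc n₁ → Euc e₁) (F₂ : Euc n₂ → Euc e₂) : Euc (n₁ + n₂) → Euc (e₁ + e₂) :=
  fun z => WithLp.toLp 2 <| Fin.append (F₁ (WithLp.toLp 2 fun i => z (Fin.castAdd n₂ i)))
    (F₂ (WithLp.toLp 2 fun i => z (Fin.natAdd n₁ i)))

lemma parallel_comp_parallel {k₁ k₂ : ℕ} (G₁ : Euc e₁ → Euc k₁) (G₂ : Euc e₂ → Euc k₂)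
    (F₁ : Euc n₁ → Euc e₁) (F₂ : Euc n₂ → Euc e₂) :
    parallel G₁ G₂ ∘ parallel F₁ F₂ = parallel (G₁ ∘ F₁) (G₂ ∘ F₂) := by
  funext z
  simp [parallel]

lemma parallel_reluV : parallel (reluV : Euc n₁ → Euc n₁) (reluV : Euc n₂ → Euc n₂) = reluV := by
  funext z; ext i
  refine Fin.addCases (fun i => ?_) (fun i => ?_) i <;> simp [parallel, reluV]

lemma parallel_affineLayer (A₁ : Matrix (Fin e₁) (Fin n₁) ℝ) (b₁ : Euc e₁)
    (A₂ : Matrix (Fin e₂) (Fin n₂) ℝ) (b₂ : Euc e₂) :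
    parallel (affineLayer A₁ b₁) (affineLayer A₂ b₂) =
      affineLayer (Matrix.reindex finSumFinEquiv finSumFinEquiv (Matrix.fromBlocks A₁ 0 0 A₂))
        (WithLp.toLp 2 (Fin.append b₁ b₂)) := by
  funext z; ext i
  refine Fin.addCases (fun i => ?_) (fun i => ?_) i <;>
    simp [parallel, affineLayer, Fin.sum_univ_add]

lemma IsFNNExact.parallel {L W₁ W₂ : ℕ} {F₁ : Euc n₁ → Euc e₁} {F₂ : Euc n₂ → Euc e₂}
    (h₁ : IsFNNExact L n₁ e₁ W₁ F₁) (h₂ : IsFNNExact L n₂ e₂ W₂ F₂) :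
    IsFNNExact L (n₁ + n₂) (e₁ + e₂) (W₁ + W₂) (parallel F₁ F₂) := by
  induction L generalizing n₁ n₂ F₁ F₂ with
  | zero =>
    obtain ⟨A₁, b₁, rfl⟩ := h₁
    obtain ⟨A₂, b₂, rfl⟩ := h₂
    exact ⟨_, _, parallel_affineLayer A₁ b₁ A₂ b₂⟩
  | succ L ih =>
    obtain ⟨m₁, hm₁, A₁, b₁, g₁, hg₁, rfl⟩ := h₁
    obtain ⟨m₂, hm₂, A₂, b₂, g₂, hg₂, rfl⟩ := h₂
    rw [← parallel_comp_parallel, ← parallel_comp_parallel, parallel_reluV, parallel_affineLayer]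
    exact ⟨m₁ + m₂, add_le_add hm₁ hm₂, _, _, _, ih hg₁ hg₂, rfl⟩

end Parallel

section Maximum

variable {n g e L W : ℕ}

lemma IsFNNExact.comp_append_self {F : Euc (n + n) → Euc e} (hF : IsFNNExact L (n + n) e W F) :
    IsFNNExact L n e W fun x => F (WithLp.toLp 2 (Fin.append x.ofLp x.ofLp)) := by
  convert hF.comp_affineLayer (Matrix.reindex finSumFinEquiv (Equiv.refl _)
    (Matrix.fromRows (1 : Matrix (Fin n) (Fin n) ℝ) 1)) 0 using 1
  funext x; congr 1; ext i
  refine Fin.addCases (fun i => ?_) (fun i => ?_) i <;>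
    simp [affineLayer, Matrix.one_apply, -Fin.natAdd_eq_addNat]

lemma isFNNExact_one_max_halves :
    IsFNNExact 1 (g + g) g (3 * g) fun v =>
      WithLp.toLp 2 fun o => max (v (Fin.castAdd g o)) (v (Fin.natAdd g o)) := by
  have h := isFNNExact_one_hiddenLayer (ι := Fin g ⊕ Fin g ⊕ Fin g) (n := g + g)
    (Sum.elim (fun o => Pi.single (Fin.castAdd g o) 1 - Pi.single (Fin.natAdd g o) 1)
      (Sum.elim (fun o => Pi.single (Fin.natAdd g o) 1) (fun o => -Pi.single (Fin.natAdd g o) 1)))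
    0 (fun o => Sum.elim (fun j => if j = o then 1 else 0)
      (Sum.elim (fun j => if j = o then 1 else 0) (fun j => if j = o then -1 else 0))) 0
  convert h using 1
  · simp only [Fintype.card_sum, Fintype.card_fin]; ring
  funext v; ext o
  simp only [Fin.natAdd_eq_addNat, Pi.zero_apply, add_zero, Fintype.sum_sum_type, Sum.elim_inl,
    Sum.elim_inr, Pi.sub_apply, Pi.neg_apply, Pi.single_apply, sub_mul, neg_mul, ite_mul, one_mul,
    zero_mul, Finset.sum_sub_distrib, Finset.sum_neg_distrib, Finset.sum_ite_eq', Finset.mem_univ,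
    ↓reduceIte]
  rw [← sub_eq_add_neg, max_zero_sub_max_neg_zero_eq_self, ← max_add_add_right, sub_add_cancel,
    zero_add]

lemma IsFNNExact.max {W' : ℕ} {F₁ F₂ : Euc n → Euc g} (h₁ : IsFNNExact L n g W F₁)
    (h₂ : IsFNNExact L n g W F₂) (hW : 2 * W ≤ W') (hg : 3 * g ≤ W') :
    IsFNNExact (L + 1) n g W' fun x => WithLp.toLp 2 fun o => max (F₁ x o) (F₂ x o) := by
  have h := ((h₁.parallel h₂).comp_append_self.mono (by omega : W + W ≤ W')).comp
    (isFNNExact_one_max_halves.mono hg)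
  convert h using 1
  funext x; ext o
  simp [_root_.parallel, -Fin.natAdd_eq_addNat]

lemma Finset.exists_union_eq_of_card_le_two_mul {α : Type*} [DecidableEq α] {S : Finset α}
    (hS : S.Nonempty) {m : ℕ} (hm : 0 < m) (hcard : S.card ≤ 2 * m) :
    ∃ T₁ T₂ : Finset α, T₁.Nonempty ∧ T₂.Nonempty ∧ T₁ ∪ T₂ = S ∧ T₁.card ≤ m ∧ T₂.card ≤ m := by
  by_cases hSm : S.card ≤ m
  · exact ⟨S, S, hS, hS, Finset.union_self S, hSm, hSm⟩
  obtain ⟨T, hTS, hT⟩ := Finset.exists_subset_card_eq (by omega : m ≤ S.card)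
  refine ⟨T, S \ T, Finset.card_pos.1 (by omega), Finset.card_pos.1 ?_,
    Finset.union_sdiff_of_subset hTS, hT.le, ?_⟩ <;> rw [Finset.card_sdiff_of_subset hTS] <;> omega

lemma IsFNNExact.finset_sup' {ι : Type*} {F : ι → Euc n → Euc g}
    (hF : ∀ i, IsFNNExact L n g W (F i)) (k : ℕ) {S : Finset ι} (hS : S.Nonempty)
    (hcard : S.card ≤ 2 ^ k) :
    IsFNNExact (L + k) n g (2 ^ k * (W + 3 * g)) fun x =>
      WithLp.toLp 2 fun o => S.sup' hS fun i => F i x o := by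
  classical
  induction k generalizing S with
  | zero =>
    obtain ⟨i, rfl⟩ := Finset.card_eq_one.1 (le_antisymm hcard hS.card_pos)
    simpa using (hF i).mono (by omega)
  | succ k ih =>
    obtain ⟨T₁, T₂, hT₁, hT₂, rfl, hc₁, hc₂⟩ :=
      Finset.exists_union_eq_of_card_le_two_mul hS (Nat.two_pow_pos k) (pow_succ' 2 k ▸ hcard)
    simp only [Finset.sup'_union hT₁ hT₂]
    exact (ih hT₁ hc₁).max (ih hT₂ hc₂) (by rw [pow_succ]; ring_nf; rfl)
      (le_mul_of_one_le_of_le Nat.one_le_two_pow (by omega))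

end Maximum

section Layers

variable {n e : ℕ}

lemma isFNNExact_one_cone (c : Euc e) (K : ℝ) (p : Euc n) :
    IsFNNExact 1 n e (2 * n) fun x => WithLp.toLp 2 fun o => c o - K * ∑ i, |x i - p i| := by
  have h := isFNNExact_one_hiddenLayer (ι := Fin n ⊕ Fin n)
    (Sum.elim (fun i => Pi.single i 1) (fun i => -Pi.single i 1))
    (Sum.elim (fun i => -p i) (fun i => p i)) (fun _ _ => -K) c.ofLp
  convert h using 1
  · simp only [Fintype.card_sum, Fintype.card_fin]; ring
  funext x; ext o
  simp [Fintype.sum_sum_type, Pi.single_apply, ← Finset.mul_sum, ← Finset.sum_add_distrib,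
    ← sub_eq_add_neg, neg_add_eq_sub, ← max_zero_add_max_neg_zero_eq_abs_self]

lemma projIcc_eq_add_max_sub_max {a b : ℝ} (hab : a ≤ b) (t : ℝ) :
    (Set.projIcc a b hab t : ℝ) = a + max (t - a) 0 - max (t - b) 0 := by
  rw [Set.coe_projIcc]
  rcases le_total t a with h | h
  · rw [max_eq_right (sub_nonpos.2 h), max_eq_right (sub_nonpos.2 (h.trans hab))]; simp [h]
  rcases le_total t b with h' | h'
  · rw [max_eq_left (sub_nonneg.2 h), max_eq_right (sub_nonpos.2 h'), min_eq_right h',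
      max_eq_right h]; ring
  · rw [max_eq_left (sub_nonneg.2 h), max_eq_left (sub_nonneg.2 h'), min_eq_left h',
      max_eq_right hab]; ring

lemma isFNNExact_one_projIcc (a b : Fin e → ℝ) (hab : ∀ i, a i ≤ b i) :
    IsFNNExact 1 e e (2 * e) fun y =>
      WithLp.toLp 2 fun i => (Set.projIcc (a i) (b i) (hab i) (y i) : ℝ) := by
  have h := isFNNExact_one_hiddenLayer (ι := Fin e ⊕ Fin e)
    (Sum.elim (fun i => Pi.single i 1) (fun i => Pi.single i 1)) (Sum.elim (-a) (-b))
    (fun o => Sum.elim (fun j => if j = o then 1 else 0) (fun j => if j = o then -1 else 0)) a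
  convert h using 1
  · simp only [Fintype.card_sum, Fintype.card_fin]; ring
  funext y; ext o
  simp only [projIcc_eq_add_max_sub_max, Fintype.sum_sum_type, Sum.elim_inl, Sum.elim_inr,
    Pi.single_apply, Pi.neg_apply, ite_mul, one_mul, neg_mul, zero_mul, Finset.sum_ite_eq',
    Finset.mem_univ, ↓reduceIte, ← sub_eq_add_neg]
  ring

end Layers

section Approximation

open scoped NNReal

variable {n e : ℕ}

lemma EuclideanSpace.norm_le_sum_abs {ι : Type*} [Fintype ι] (x : EuclideanSpace ℝ ι) :
    ‖x‖ ≤ ∑ i, |x i| := by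
  rw [EuclideanSpace.norm_eq, Real.sqrt_le_left (Finset.sum_nonneg fun i _ => abs_nonneg _)]
  simpa only [Real.norm_eq_abs, sq_abs] using
    Finset.sum_sq_le_sq_sum_of_nonneg (s := Finset.univ) fun i _ => abs_nonneg (x i)

lemma EuclideanSpace.norm_le_card_mul_of_forall_abs_apply_le {ι : Type*} [Fintype ι]
    {x : EuclideanSpace ℝ ι} {ε : ℝ} (hx : ∀ i, |x i| ≤ ε) : ‖x‖ ≤ Fintype.card ι * ε :=
  calc ‖x‖ ≤ ∑ i, |x i| := norm_le_sum_abs x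
    _ ≤ ∑ _i : ι, ε := Finset.sum_le_sum fun i _ => hx i
    _ = Fintype.card ι * ε := by simp

lemma LipschitzOnWith.abs_apply_sub_le {ι κ : Type*} [Fintype ι] [Fintype κ]
    {f : EuclideanSpace ℝ ι → EuclideanSpace ℝ κ} {K : ℝ≥0} {s : Set (EuclideanSpace ℝ ι)}
    (hf : LipschitzOnWith K f s) {x y : EuclideanSpace ℝ ι} (hx : x ∈ s) (hy : y ∈ s) (o : κ) :
    |f x o - f y o| ≤ K * ∑ i, |x i - y i| :=
  calc |f x o - f y o| ≤ ‖f x - f y‖ := PiLp.norm_apply_le (f x - f y) o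
    _ ≤ K * ‖x - y‖ := by simpa only [dist_eq_norm] using hf.dist_le_mul x hx y hy
    _ ≤ K * ∑ i, |x i - y i| := by gcongr; exact EuclideanSpace.norm_le_sum_abs (x - y)

lemma abs_sub_finset_sup'_le {ι : Type*} {G : Finset ι} (hG : G.Nonempty) {a δ : ℝ}
    {φ d : ι → ℝ} (hφ : ∀ p ∈ G, |a - φ p| ≤ d p) (hnear : ∃ p ∈ G, d p ≤ δ) :
    |a - G.sup' hG (fun p => φ p - d p)| ≤ 2 * δ := by
  obtain ⟨p₀, hp₀, hd₀⟩ := hnear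
  have hupper : G.sup' hG (fun p => φ p - d p) ≤ a :=
    Finset.sup'_le hG _ fun p hp => by linarith [(abs_le.1 (hφ p hp)).1]
  have hlower : φ p₀ - d p₀ ≤ G.sup' hG (fun p => φ p - d p) :=
    Finset.le_sup' (fun p => φ p - d p) hp₀
  have := (abs_le.1 (hφ p₀ hp₀)).2
  rw [abs_le]
  constructor <;> linarith

def unitGrid (n N : ℕ) : Finset (Euc n) :=
  Finset.univ.image fun q : Fin n → Fin (N + 1) => WithLp.toLp 2 fun i => (q i : ℝ) / N

lemma unitGrid_nonempty (n N : ℕ) : (unitGrid n N).Nonempty :=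
  Finset.univ_nonempty.image _

lemma card_unitGrid_le (n N : ℕ) : (unitGrid n N).card ≤ (N + 1) ^ n :=
  Finset.card_image_le.trans (by simp)

lemma mem_unitCube_of_mem_unitGrid {N : ℕ} {p : Euc n} (hp : p ∈ unitGrid n N) :
    p ∈ unitCube n := by
  obtain ⟨q, -, rfl⟩ := Finset.mem_image.1 hp
  intro i
  exact ⟨by positivity, div_le_one_of_le₀ (by exact_mod_cast (q i).is_le) (Nat.cast_nonneg N)⟩

lemma exists_mem_unitGrid_abs_sub_le {N : ℕ} (hN : 0 < N) {x : Euc n} (hx : x ∈ unitCube n) :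
    ∃ p ∈ unitGrid n N, ∀ i, |x i - p i| ≤ 1 / N := by
  have hN' : (0 : ℝ) < N := by exact_mod_cast hN
  have hfloor : ∀ i, ⌊x i * N⌋₊ < N + 1 := fun i => Nat.lt_succ_of_le <|
    Nat.floor_le_of_le (by nlinarith [(hx i).2])
  refine ⟨_, Finset.mem_image_of_mem _ (Finset.mem_univ fun i => ⟨_, hfloor i⟩), fun i => ?_⟩
  have h₀ : (⌊x i * N⌋₊ : ℝ) ≤ x i * N := Nat.floor_le (by nlinarith [(hx i).1])
  have h₁ : x i * N < ⌊x i * N⌋₊ + 1 := Nat.lt_floor_add_one _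
  have : x i - ⌊x i * N⌋₊ / N = (x i * N - ⌊x i * N⌋₊) / N := by field_simp
  simp only [this, abs_div, abs_of_pos hN']
  gcongr
  rw [abs_le]; constructor <;> linarith

lemma exists_isFNNExact_approx {f : Euc n → Euc e} {K : ℝ≥0}
    (hf : LipschitzOnWith K f (unitCube n)) (s : ℕ) :
    ∃ F : Euc n → Euc e,
      IsFNNExact (1 + n * (s + 1)) n e (2 ^ (n * (s + 1)) * (2 * n + 3 * e)) F ∧
      ∀ x ∈ unitCube n, ∀ o, |f x o - F x o| ≤ 2 * K * n / 2 ^ s := by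
  have hcard : (unitGrid n (2 ^ s)).card ≤ 2 ^ (n * (s + 1)) := by
    refine (card_unitGrid_le n _).trans ?_
    rw [mul_comm, pow_mul]
    exact Nat.pow_le_pow_left (by rw [pow_succ]; linarith [Nat.one_le_two_pow (n := s)]) n
  refine ⟨fun x => WithLp.toLp 2 fun o => (unitGrid n (2 ^ s)).sup' (unitGrid_nonempty n _)
    fun p => f p o - K * ∑ i, |x i - p i|,
    IsFNNExact.finset_sup' (fun p => isFNNExact_one_cone (f p) K p) _ _ hcard, fun x hx o => ?_⟩
  obtain ⟨p₀, hp₀, hnear⟩ := exists_mem_unitGrid_abs_sub_le (Nat.two_pow_pos s) hx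
  have hsum : ∑ i, |x i - p₀ i| ≤ n * (1 / 2 ^ s) := by
    simpa using Finset.sum_le_sum fun i (_ : i ∈ Finset.univ) => hnear i
  refine (abs_sub_finset_sup'_le (unitGrid_nonempty n _)
    (fun p hp => hf.abs_apply_sub_le hx (mem_unitCube_of_mem_unitGrid hp) o)
    ⟨p₀, hp₀, mul_le_mul_of_nonneg_left hsum K.2⟩).trans_eq ?_
  ring

lemma exists_memFNN_approx_mapsTo {A : Set (Euc e)}
    (hA : A = Set.univ ∨ ∃ a b : Fin e → ℝ, (∀ i, a i ≤ b i) ∧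
      A = {y : Euc e | ∀ i, y i ∈ Icc (a i) (b i)})
    {f : Euc n → Euc e} {K : ℝ≥0} (hf : LipschitzOnWith K f (unitCube n))
    (hfA : ∀ x ∈ unitCube n, f x ∈ A) (s : ℕ) :
    ∃ F : Euc n → Euc e, MemFNN n e (n * (s + 1) + 2) (2 ^ (n * (s + 1)) * (2 * n + 3 * e)) F ∧
      (∀ x ∈ unitCube n, ∀ o, |f x o - F x o| ≤ 2 * K * n / 2 ^ s) ∧ ∀ x, F x ∈ A := by
  obtain ⟨F₀, hF₀, herr⟩ := exists_isFNNExact_approx hf s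
  rcases hA with rfl | ⟨a, b, hab, rfl⟩
  · exact ⟨F₀, ⟨_, by omega, hF₀⟩, herr, fun _ => trivial⟩
  have hclamp := (isFNNExact_one_projIcc a b hab).mono (W' := 2 ^ (n * (s + 1)) * (2 * n + 3 * e))
    (le_mul_of_one_le_of_le Nat.one_le_two_pow (by omega))
  refine ⟨_, ⟨_, by omega, hF₀.comp hclamp⟩, fun x hx o => ?_, fun x o => Subtype.prop _⟩
  have hfx : f x o ∈ Icc (a o) (b o) := hfA x hx o
  calc |f x o - Set.projIcc (a o) (b o) (hab o) (F₀ x o)|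
      = |(Set.projIcc (a o) (b o) (hab o) (f x o) : ℝ) -
          Set.projIcc (a o) (b o) (hab o) (F₀ x o)| := by
        rw [Set.projIcc_of_mem _ hfx]
    _ ≤ |f x o - F₀ x o| := Set.abs_projIcc_sub_projIcc (hab o)
    _ ≤ 2 * K * n / 2 ^ s := herr x hx o

end Approximation

section GridExponent

def gridExponent (n M : ℕ) : ℕ := Nat.log 2 M / n + 1

lemma mul_gridExponent_add_one_le (n M : ℕ) :
    n * (gridExponent n M + 1) ≤ Nat.log 2 M + 2 * n := by
  have := Nat.mul_div_le (Nat.log 2 M) n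
  rw [gridExponent, mul_add, mul_add]; omega

lemma two_pow_mul_gridExponent_add_one_le (n : ℕ) {M : ℕ} (hM : M ≠ 0) :
    2 ^ (n * (gridExponent n M + 1)) ≤ 4 ^ n * M :=
  calc 2 ^ (n * (gridExponent n M + 1)) ≤ 2 ^ (Nat.log 2 M + 2 * n) :=
        Nat.pow_le_pow_right two_pos (mul_gridExponent_add_one_le n M)
    _ = 4 ^ n * 2 ^ Nat.log 2 M := by rw [pow_add, pow_mul, mul_comm]; norm_num
    _ ≤ 4 ^ n * M := by gcongr; exact Nat.pow_log_le_self 2 hM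

lemma natLog_two_le_two_mul_log (M : ℕ) : (Nat.log 2 M : ℝ) ≤ 2 * Real.log M := by
  rcases Nat.eq_zero_or_pos M with rfl | hM
  · simp
  have hpow : ((2 : ℝ) ^ Nat.log 2 M) ≤ M := by exact_mod_cast Nat.pow_log_le_self 2 hM.ne'
  have hlog : Nat.log 2 M * Real.log 2 ≤ Real.log M := by
    rw [← Real.log_pow]; exact Real.log_le_log (by positivity) hpow
  nlinarith [Real.log_two_gt_d9, (Nat.log 2 M).cast_nonneg (α := ℝ)]

lemma inv_two_pow_gridExponent_le (n : ℕ) {M : ℕ} (hM : M ≠ 0) :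
    ((2 : ℝ) ^ gridExponent n M)⁻¹ ≤ (M : ℝ) ^ (-(1 / (n : ℝ))) := by
  rw [Real.rpow_neg M.cast_nonneg]
  refine inv_anti₀ (by positivity) ?_
  rcases Nat.eq_zero_or_pos n with rfl | hn
  · -- `1 / (0 : ℝ) = 0`, so the left side is `M ^ 0 = 1`
    simp [gridExponent]
  have hpow : M ≤ (2 ^ gridExponent n M) ^ n := by
    rw [← pow_mul, mul_comm]
    exact (Nat.lt_pow_succ_log_self one_lt_two M).le.trans
      (Nat.pow_le_pow_right two_pos (Nat.lt_mul_div_succ _ hn))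
  calc (M : ℝ) ^ (1 / (n : ℝ)) ≤ (((2 : ℝ) ^ gridExponent n M) ^ n) ^ (1 / (n : ℝ)) := by
        gcongr; exact_mod_cast hpow
    _ = 2 ^ gridExponent n M := by
        rw [one_div, Real.pow_rpow_inv_natCast (by positivity) hn.ne']

end GridExponent

theorem lipschitz_approx_vector_general (din dout : ℕ)
    (A : Set (Euc dout))
    (hA : A = Set.univ ∨ ∃ a b : Fin dout → ℝ, (∀ i, a i ≤ b i) ∧
      A = {y : Euc dout | ∀ i, y i ∈ Icc (a i) (b i)})
    (fstar : Euc din → Euc dout) (K : ℝ)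
    (hrange : ∀ x ∈ unitCube din, fstar x ∈ A)
    (hlip : ∀ x ∈ unitCube din, ∀ y ∈ unitCube din, ‖fstar x - fstar y‖ ≤ K * ‖x - y‖) :
    ∃ c C : ℝ, 0 < c ∧ 0 < C ∧ ∀ M : ℕ, 1 ≤ M →
      ∃ (L W : ℕ) (f : Euc din → Euc dout),
        (L : ℝ) ≤ c * (1 + Real.log M) ∧ (W : ℝ) ≤ c * M ∧
        MemFNN din dout L W f ∧
        (∀ x ∈ unitCube din, ‖fstar x - f x‖ ≤ C * (M : ℝ) ^ (-(1 / (din : ℝ)))) ∧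
        (∀ x : Euc din, f x ∈ A) := by
  have hf : LipschitzOnWith K.toNNReal fstar (unitCube din) :=
    LipschitzOnWith.of_dist_le_mul fun x hx y hy => by
      simpa only [dist_eq_norm] using (hlip x hx y hy).trans (by gcongr; exact le_max_left K 0)
  refine ⟨4 ^ din * (2 * din + 3 * dout) + 2 * din + 2, 2 * K.toNNReal * din * dout + 1,
    by positivity, by positivity, fun M hM => ?_⟩
  set s := gridExponent din M
  obtain ⟨F, hF, herr, hFA⟩ := exists_memFNN_approx_mapsTo hA hf hrange s
  refine ⟨_, _, F, ?_, ?_, hF, fun x hx => ?_, hFA⟩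
  · have hdepth : (din * (s + 1) : ℕ) ≤ (Nat.log 2 M + 2 * din : ℝ) := by
      exact_mod_cast mul_gridExponent_add_one_le din M
    have hlog := Real.log_nonneg (Nat.one_le_cast.2 hM : (1 : ℝ) ≤ M)
    have hc : (0 : ℝ) ≤ 4 ^ din * (2 * din + 3 * dout) * (1 + Real.log M) := by positivity
    push_cast at hdepth ⊢
    nlinarith [natLog_two_le_two_mul_log M, mul_nonneg din.cast_nonneg hlog]
  · have hwidth : ((2 ^ (din * (s + 1)) : ℕ) : ℝ) ≤ (4 ^ din * M : ℕ) := by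
      exact_mod_cast two_pow_mul_gridExponent_add_one_le din (M := M) (by omega)
    have hc : (0 : ℝ) ≤ (2 * din + 2) * M := by positivity
    push_cast at hwidth ⊢
    nlinarith [mul_le_mul_of_nonneg_right hwidth (by positivity : (0 : ℝ) ≤ 2 * din + 3 * dout)]
  · calc ‖fstar x - F x‖ ≤ Fintype.card (Fin dout) * (2 * K.toNNReal * din / 2 ^ s) :=
          EuclideanSpace.norm_le_card_mul_of_forall_abs_apply_le (herr x hx)
      _ = 2 * K.toNNReal * din * dout * ((2 : ℝ) ^ s)⁻¹ := by rw [Fintype.card_fin]; ring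
      _ ≤ 2 * K.toNNReal * din * dout * (M : ℝ) ^ (-(1 / (din : ℝ))) := by
        gcongr; exact inv_two_pow_gridExponent_le din (by omega)
      _ ≤ _ := by gcongr; linarith

/-- Let `f* : [0,1]^{d_in} → A` with finite 1-Hölder norm `K`, where
`A = ℝ^{d_out}` or `A` is a cube `∏_i [a_i, b_i]`.  Then there exist constants `c, C > 0`
such that for every `M ≥ 1` there is `f_NN ∈ F_NN(d_in, d_out, L, W)` with
`L ≤ c(1 + log M)`, `W ≤ c·M`, sup-error on `[0,1]^{d_in}` at most `C·M^{−1/d_in}`, and the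
range of `f_NN` contained in `A`. -/
theorem lipschitz_approx_vector (din dout : ℕ) (hdin : 0 < din)
    (A : Set (Euc dout))
    (hA : A = Set.univ ∨ ∃ a b : Fin dout → ℝ, (∀ i, a i ≤ b i) ∧
      A = {y : Euc dout | ∀ i, y i ∈ Icc (a i) (b i)})
    (fstar : Euc din → Euc dout) (K : ℝ)
    (hrange : ∀ x ∈ unitCube din, fstar x ∈ A)
    (hbd : ∀ x ∈ unitCube din, ‖fstar x‖ ≤ K)
    (hlip : ∀ x ∈ unitCube din, ∀ y ∈ unitCube din, ‖fstar x - fstar y‖ ≤ K * ‖x - y‖) :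
    ∃ c C : ℝ, 0 < c ∧ 0 < C ∧ ∀ M : ℕ, 1 ≤ M →
      ∃ (L W : ℕ) (f : Euc din → Euc dout),
        (L : ℝ) ≤ c * (1 + Real.log M) ∧ (W : ℝ) ≤ c * M ∧
        MemFNN din dout L W f ∧
        (∀ x ∈ unitCube din, ‖fstar x - f x‖ ≤ C * (M : ℝ) ^ (-(1 / (din : ℝ)))) ∧
        (∀ x : Euc din, f x ∈ A) :=
  lipschitz_approx_vector_general din dout A hA fstar K hrange hlip

end
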